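/- arXiv:1301.0471 — 3 statements merged into one kernel-verified Lean document; each statement's English description precedes it below -/
import Mathlib

section
/- Let p > 1 and set ρ(y) = (1-y²)^{2/(p-1)} for y ∈ (-1,1). Then there exists a constant C = C(p) > 0 such that for every continuously differentiable function h : (-1,1) → ℝ one has ∫_{-1}^{1} h(y)² ρ(y)/(1-y²) dy ≤ C ∫_{-1}^{1} h(y)² ρ(y) dy + C ∫_{-1}^{1} h'(y)² (1-y²) ρ(y) dy (an inequality in [0,∞], in particular valid whenever the right-hand side is finite). -/
open MeasureTheory Real Set

noncomputable def rho (p : ℝ) (y : ℝ) : ℝ := (1 - y ^ 2) ^ (2 / (p - 1))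

/-!
Write `w = 1 - y²` and `ρ = w ^ α` with `α = 2 / (p - 1) > 0`. The flux `y h² ρ` has derivative
`h² ρ + 2 y h h' ρ - 2 α y² h² ρ / w`; since `1 / w = 1 + y² / w`, completing the square
`(ρ / w) (y h - w h' / α)² ≥ 0` gives pointwise
`h² ρ / w ≤ (1 + 1/α) h² ρ + α⁻² h'² w ρ - α⁻¹ (y h² ρ)'`.
On `[a, b]` with `a ≤ 0 ≤ b` the boundary term `-α⁻¹ [y h² ρ]ₐᵇ` is nonpositive, so integrating and
letting `a → -1`, `b → 1` gives the estimate with `C = 1 + 1/α + 1/α²`.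
-/

open Filter Topology

theorem one_sub_sq_pos_of_mem_Ioo {y : ℝ} (hy : y ∈ Ioo (-1 : ℝ) 1) : 0 < 1 - y ^ 2 := by
  nlinarith [hy.1, hy.2]

theorem continuousOn_one_sub_sq_rpow (α : ℝ) :
    ContinuousOn (fun y : ℝ => (1 - y ^ 2) ^ α) (Ioo (-1) 1) :=
  ContinuousOn.rpow_const (by fun_prop) fun _ hy => Or.inl (one_sub_sq_pos_of_mem_Ioo hy).ne'

theorem hasDerivAt_mul_sq_mul_one_sub_sq_rpow {h : ℝ → ℝ} {h' y : ℝ} (α : ℝ)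
    (hh : HasDerivAt h h' y) (hy : 1 - y ^ 2 ≠ 0) :
    HasDerivAt (fun x => x * h x ^ 2 * (1 - x ^ 2) ^ α)
      (h y ^ 2 * (1 - y ^ 2) ^ α + y * (2 * h y * h' * (1 - y ^ 2) ^ α)
        - 2 * α * y ^ 2 * (h y ^ 2 * (1 - y ^ 2) ^ α) / (1 - y ^ 2)) y := by
  have hw : HasDerivAt (fun x : ℝ => 1 - x ^ 2) (-(2 * y)) y := by
    simpa using (hasDerivAt_pow 2 y).const_sub 1
  refine (((hasDerivAt_id' y).mul (hh.pow 2)).mul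
    (hw.rpow_const (p := α) (Or.inl hy))).congr_deriv ?_
  simp only [Pi.mul_apply, Pi.pow_apply, rpow_sub_one hy]
  field_simp
  ring

theorem sq_mul_div_one_sub_sq_le {α y a d W : ℝ} (hα : 0 < α) (hw : 0 < 1 - y ^ 2) (hW : 0 ≤ W) :
    a ^ 2 * W / (1 - y ^ 2) ≤ (1 + 1 / α) * (a ^ 2 * W) + 1 / α ^ 2 * (d ^ 2 * (1 - y ^ 2) * W)
      - 1 / α * (a ^ 2 * W + y * (2 * a * d * W) - 2 * α * y ^ 2 * (a ^ 2 * W) / (1 - y ^ 2)) := by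
  have hsq : 0 ≤ W / (1 - y ^ 2) * (y * a - d * (1 - y ^ 2) / α) ^ 2 := by positivity
  have hgap : (1 + 1 / α) * (a ^ 2 * W) + 1 / α ^ 2 * (d ^ 2 * (1 - y ^ 2) * W)
      - 1 / α * (a ^ 2 * W + y * (2 * a * d * W) - 2 * α * y ^ 2 * (a ^ 2 * W) / (1 - y ^ 2))
      - a ^ 2 * W / (1 - y ^ 2) = W / (1 - y ^ 2) * (y * a - d * (1 - y ^ 2) / α) ^ 2 := by
    field_simp
    ring
  linarith

theorem intervalIntegral.integral_le_sub_of_hasDerivAt_of_le {f g G G' : ℝ → ℝ} {a b : ℝ}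
    (hab : a ≤ b) (hG : ∀ x ∈ Icc a b, HasDerivAt G (G' x) x)
    (hf : IntervalIntegrable f volume a b) (hg : IntervalIntegrable g volume a b)
    (hG' : IntervalIntegrable G' volume a b) (hle : ∀ x ∈ Icc a b, f x ≤ g x - G' x) :
    ∫ x in a..b, f x ≤ (∫ x in a..b, g x) - (G b - G a) := by
  rw [← intervalIntegral.integral_eq_sub_of_hasDerivAt (by rwa [uIcc_of_le hab]) hG',
    ← intervalIntegral.integral_sub hg hG']
  exact intervalIntegral.integral_mono_on hab hf (hg.sub hG') hle

theorem lintegral_Icc_ofReal_eq_intervalIntegral {f : ℝ → ℝ} {a b : ℝ} (hab : a ≤ b)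
    (hf : ContinuousOn f (Icc a b)) (hf0 : ∀ x ∈ Icc a b, 0 ≤ f x) :
    ∫⁻ x in Icc a b, ENNReal.ofReal (f x) = ENNReal.ofReal (∫ x in a..b, f x) := by
  rw [intervalIntegral.integral_of_le hab, ← integral_Icc_eq_integral_Ioc,
    ofReal_integral_eq_lintegral_ofReal (hf.integrableOn_Icc)
      (ae_restrict_of_forall_mem measurableSet_Icc hf0)]

theorem setLIntegral_Ioo_le_of_forall_Icc_le {f : ℝ → ENNReal} {a m b : ℝ} {M : ENNReal}
    (ham : a < m) (hmb : m < b) (hf : AEMeasurable f (volume.restrict (Ioo a b)))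
    (hM : ∀ c ∈ Ioc a m, ∀ d ∈ Ico m b, ∫⁻ x in Icc c d, f x ≤ M) :
    ∫⁻ x in Ioo a b, f x ≤ M := by
  have hcover : AECover (volume.restrict (Ioo a b)) (𝓝[>] a ×ˢ 𝓝[<] b)
      fun q : ℝ × ℝ => Icc q.1 q.2 :=
    aecover_Ioo_of_Icc (tendsto_fst.mono_right nhdsWithin_le_nhds)
      (tendsto_snd.mono_right nhdsWithin_le_nhds)
  refine le_of_tendsto (hcover.lintegral_tendsto_of_countably_generated hf) ?_
  filter_upwards [prod_mem_prod (Ioo_mem_nhdsGT ham) (Ioo_mem_nhdsLT hmb)] with q hq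
  exact (lintegral_mono' (Measure.restrict_mono subset_rfl Measure.restrict_le_self) le_rfl).trans
    (hM q.1 (Ioo_subset_Ioc_self hq.1) q.2 (Ioo_subset_Ico_self hq.2))

section
variable {α : ℝ} {h : ℝ → ℝ}

theorem integral_sq_mul_rpow_div_le (hα : 0 < α) (hh : ContDiffOn ℝ 1 h (Ioo (-1) 1))
    {a b : ℝ} (ha : -1 < a) (ha0 : a ≤ 0) (hb0 : 0 ≤ b) (hb : b < 1) :
    ∫ y in a..b, h y ^ 2 * (1 - y ^ 2) ^ α / (1 - y ^ 2) ≤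
      (1 + 1 / α) * (∫ y in a..b, h y ^ 2 * (1 - y ^ 2) ^ α) +
        1 / α ^ 2 * ∫ y in a..b, deriv h y ^ 2 * (1 - y ^ 2) * (1 - y ^ 2) ^ α := by
  have hab : a ≤ b := ha0.trans hb0
  have hsub : Icc a b ⊆ Ioo (-1) 1 := Icc_subset_Ioo ha hb
  have hw : ∀ y ∈ Icc a b, 0 < 1 - y ^ 2 := fun y hy => one_sub_sq_pos_of_mem_Ioo (hsub hy)
  have hcont_h : ContinuousOn h (Icc a b) := hh.continuousOn.mono hsub
  have hcont_h' : ContinuousOn (deriv h) (Icc a b) :=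
    (hh.continuousOn_deriv_of_isOpen isOpen_Ioo le_rfl).mono hsub
  have hcont_W : ContinuousOn (fun y : ℝ => (1 - y ^ 2) ^ α) (Icc a b) :=
    (continuousOn_one_sub_sq_rpow α).mono hsub
  have hint_f1 : IntervalIntegrable (fun y => h y ^ 2 * (1 - y ^ 2) ^ α) volume a b :=
    ContinuousOn.intervalIntegrable_of_Icc hab (by fun_prop)
  have hint_f2 : IntervalIntegrable (fun y => deriv h y ^ 2 * (1 - y ^ 2) * (1 - y ^ 2) ^ α)
      volume a b := ContinuousOn.intervalIntegrable_of_Icc hab (by fun_prop)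
  have hint_f : IntervalIntegrable (fun y => h y ^ 2 * (1 - y ^ 2) ^ α / (1 - y ^ 2))
      volume a b := ContinuousOn.intervalIntegrable_of_Icc hab
    (.div (by fun_prop) (by fun_prop) fun y hy => (hw y hy).ne')
  have hint_G' : IntervalIntegrable (fun y => 1 / α * (h y ^ 2 * (1 - y ^ 2) ^ α
      + y * (2 * h y * deriv h y * (1 - y ^ 2) ^ α)
      - 2 * α * y ^ 2 * (h y ^ 2 * (1 - y ^ 2) ^ α) / (1 - y ^ 2))) volume a b :=
    ContinuousOn.intervalIntegrable_of_Icc hab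
      (.mul (by fun_prop) (.sub (by fun_prop) (.div (by fun_prop) (by fun_prop)
        fun y hy => (hw y hy).ne')))
  have hG (y) (hy : y ∈ Icc a b) := ((hasDerivAt_mul_sq_mul_one_sub_sq_rpow α
    ((hh.differentiableOn one_ne_zero).differentiableAt
      (isOpen_Ioo.mem_nhds (hsub hy))).hasDerivAt (hw y hy).ne').const_mul (1 / α))
  have key := intervalIntegral.integral_le_sub_of_hasDerivAt_of_le hab hG hint_f
    ((hint_f1.const_mul (1 + 1 / α)).add (hint_f2.const_mul (1 / α ^ 2))) hint_G'
    fun y hy => sq_mul_div_one_sub_sq_le hα (hw y hy) (rpow_nonneg (hw y hy).le α)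
  rw [intervalIntegral.integral_add (hint_f1.const_mul _) (hint_f2.const_mul _),
    intervalIntegral.integral_const_mul, intervalIntegral.integral_const_mul] at key
  have hGa : a * h a ^ 2 * (1 - a ^ 2) ^ α ≤ 0 :=
    mul_nonpos_of_nonpos_of_nonneg (mul_nonpos_of_nonpos_of_nonneg ha0 (sq_nonneg _))
      (rpow_nonneg (hw a ⟨le_rfl, hab⟩).le α)
  have hGb : 0 ≤ b * h b ^ 2 * (1 - b ^ 2) ^ α :=
    mul_nonneg (mul_nonneg hb0 (sq_nonneg _)) (rpow_nonneg (hw b ⟨hab, le_rfl⟩).le α)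
  have hboundary : 1 / α * (a * h a ^ 2 * (1 - a ^ 2) ^ α) ≤
      1 / α * (b * h b ^ 2 * (1 - b ^ 2) ^ α) :=
    mul_le_mul_of_nonneg_left (hGa.trans hGb) (by positivity)
  linarith

theorem lintegral_Icc_sq_mul_rpow_div_le (hα : 0 < α) (hh : ContDiffOn ℝ 1 h (Ioo (-1) 1))
    {a b : ℝ} (ha : -1 < a) (ha0 : a ≤ 0) (hb0 : 0 ≤ b) (hb : b < 1) :
    ∫⁻ y in Icc a b, ENNReal.ofReal (h y ^ 2 * (1 - y ^ 2) ^ α / (1 - y ^ 2)) ≤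
      ENNReal.ofReal (1 + 1 / α) * (∫⁻ y in Icc a b, ENNReal.ofReal (h y ^ 2 * (1 - y ^ 2) ^ α)) +
        ENNReal.ofReal (1 / α ^ 2) *
          ∫⁻ y in Icc a b, ENNReal.ofReal (deriv h y ^ 2 * (1 - y ^ 2) * (1 - y ^ 2) ^ α) := by
  have hab : a ≤ b := ha0.trans hb0
  have hsub : Icc a b ⊆ Ioo (-1) 1 := Icc_subset_Ioo ha hb
  have hw : ∀ y ∈ Icc a b, 0 < 1 - y ^ 2 := fun y hy => one_sub_sq_pos_of_mem_Ioo (hsub hy)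
  have hW : ∀ y ∈ Icc a b, 0 ≤ (1 - y ^ 2) ^ α := fun y hy => rpow_nonneg (hw y hy).le α
  have hcont_h : ContinuousOn h (Icc a b) := hh.continuousOn.mono hsub
  have hcont_h' : ContinuousOn (deriv h) (Icc a b) :=
    (hh.continuousOn_deriv_of_isOpen isOpen_Ioo le_rfl).mono hsub
  have hcont_W : ContinuousOn (fun y : ℝ => (1 - y ^ 2) ^ α) (Icc a b) :=
    (continuousOn_one_sub_sq_rpow α).mono hsub
  have hc : ContinuousOn (fun y => h y ^ 2 * (1 - y ^ 2) ^ α / (1 - y ^ 2)) (Icc a b) :=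
    .div (by fun_prop) (by fun_prop) fun y hy => (hw y hy).ne'
  have hc1 : ContinuousOn (fun y => h y ^ 2 * (1 - y ^ 2) ^ α) (Icc a b) := by fun_prop
  have hc2 : ContinuousOn (fun y => deriv h y ^ 2 * (1 - y ^ 2) * (1 - y ^ 2) ^ α) (Icc a b) := by
    fun_prop
  rw [lintegral_Icc_ofReal_eq_intervalIntegral hab hc
      fun y hy => div_nonneg (mul_nonneg (sq_nonneg _) (hW y hy)) (hw y hy).le,
    lintegral_Icc_ofReal_eq_intervalIntegral hab hc1
      fun y hy => mul_nonneg (sq_nonneg _) (hW y hy),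
    lintegral_Icc_ofReal_eq_intervalIntegral hab hc2
      fun y hy => mul_nonneg (mul_nonneg (sq_nonneg _) (hw y hy).le) (hW y hy),
    ← ENNReal.ofReal_mul (by positivity), ← ENNReal.ofReal_mul (by positivity)]
  exact (ENNReal.ofReal_le_ofReal
    (integral_sq_mul_rpow_div_le hα hh ha ha0 hb0 hb)).trans ENNReal.ofReal_add_le

end

/-- Hardy–Sobolev estimate: for `p > 1` there is `C = C(p) > 0` such that for every
`C¹` function `h` on `(-1,1)`,
`∫ h² ρ/(1-y²) ≤ C ∫ h² ρ + C ∫ (h')² (1-y²) ρ`, as an inequality in `[0,∞]`. -/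
theorem hardy_sobolev_estimate (p : ℝ) (hp : 1 < p) :
    ∃ C : ℝ, 0 < C ∧
      ∀ h : ℝ → ℝ, ContDiffOn ℝ 1 h (Ioo (-1 : ℝ) 1) →
        (∫⁻ y in Ioo (-1 : ℝ) 1, ENNReal.ofReal ((h y) ^ 2 * rho p y / (1 - y ^ 2))) ≤
          ENNReal.ofReal C *
              (∫⁻ y in Ioo (-1 : ℝ) 1, ENNReal.ofReal ((h y) ^ 2 * rho p y)) +
            ENNReal.ofReal C *
              (∫⁻ y in Ioo (-1 : ℝ) 1,
                ENNReal.ofReal ((deriv h y) ^ 2 * (1 - y ^ 2) * rho p y)) := by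
  set α := 2 / (p - 1)
  have hα : 0 < α := div_pos two_pos (by linarith)
  refine ⟨1 + 1 / α + 1 / α ^ 2, by positivity, fun h hh => ?_⟩
  have hmeas : AEMeasurable (fun y => ENNReal.ofReal (h y ^ 2 * rho p y / (1 - y ^ 2)))
      (volume.restrict (Ioo (-1) 1)) := by
    have := continuousOn_one_sub_sq_rpow α
    refine (ContinuousOn.aemeasurable ?_ measurableSet_Ioo).ennreal_ofReal
    exact .div (.mul (hh.continuousOn.pow 2) this) (by fun_prop)
      fun y hy => (one_sub_sq_pos_of_mem_Ioo hy).ne'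
  calc _ ≤ ENNReal.ofReal (1 + 1 / α) *
          (∫⁻ y in Ioo (-1 : ℝ) 1, ENNReal.ofReal ((h y) ^ 2 * rho p y)) +
        ENNReal.ofReal (1 / α ^ 2) *
          ∫⁻ y in Ioo (-1 : ℝ) 1, ENNReal.ofReal ((deriv h y) ^ 2 * (1 - y ^ 2) * rho p y) := by
        refine setLIntegral_Ioo_le_of_forall_Icc_le (m := 0) (by norm_num) (by norm_num) hmeas
          fun c hc d hd => (lintegral_Icc_sq_mul_rpow_div_le hα hh hc.1 hc.2 hd.1 hd.2).trans ?_
        gcongr _ * ?_ + _ * ?_ <;> exact lintegral_mono_set (Icc_subset_Ioo hc.1 hd.2)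
    _ ≤ _ := by
        gcongr ENNReal.ofReal ?_ * _ + ENNReal.ofReal ?_ * _
        · have : 0 ≤ 1 / α ^ 2 := by positivity
          linarith
        · have : 0 ≤ 1 / α := by positivity
          linarith
end

section
/- Let p > 1. For every d ∈ (-1,1), ∫_{-1}^{1} [ (1/2)(∂_y κ(d,y))² (1-y²) + ((p+1)/(p-1)²) κ(d,y)² − (1/(p+1)) κ(d,y)^{p+1} ] ρ(y) dy = ∫_{-1}^{1} [ ((p+1)/(p-1)²) κ₀² − (1/(p+1)) κ₀^{p+1} ] ρ(y) dy. In other words, E₀((κ(d,·),0)) = E₀((κ₀,0)) for all |d| < 1, where E₀ is the unperturbed energy in similarity variables. -/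
/-!
The Lorentz transformation `φ_d(y) = (y + d)/(1 + d y)` maps `[-1, 1]` onto itself with
Jacobian `(1 - d²)/(1 + d y)²`, and it relates the two profiles by
`ρ(φ_d y) κ₀² = ρ(y) κ(d,y)²`. Using `κ₀^{p-1} = 2(p+1)/(p-1)²` and
`∂_y κ = -(2/(p-1)) d κ/(1 + d y)`, the energy density of `κ(d,·)` differs from the pull-back
by `φ_d` of the energy density of `κ₀` by the derivative of the flux
`-(d/(p-1)) (1 - y²) ρ κ(d,·)² / (1 + d y)`, which vanishes at `y = ±1`. Integrating this
identity and changing variables `u = φ_d(y)` gives the equality of energies.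
-/

open MeasureTheory Real Set

/-- The constant `κ₀ = (2(p+1)/(p-1)²)^{1/(p-1)}`. -/
noncomputable def kappa0 (p : ℝ) : ℝ := (2 * (p + 1) / (p - 1) ^ 2) ^ (1 / (p - 1))

/-- The soliton `κ(d,y) = κ₀ (1-d²)^{1/(p-1)} (1+dy)^{-2/(p-1)}`. -/
noncomputable def kappa (p d y : ℝ) : ℝ :=
  kappa0 p * (1 - d ^ 2) ^ (1 / (p - 1)) / (1 + d * y) ^ (2 / (p - 1))

noncomputable def lorentz (d y : ℝ) : ℝ := (y + d) / (1 + d * y)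

/-- The integrand of `E₀((W, 0))`. -/
noncomputable def energyDensity (p : ℝ) (W : ℝ → ℝ) (y : ℝ) : ℝ :=
  ((1 / 2) * deriv W y ^ 2 * (1 - y ^ 2) + ((p + 1) / (p - 1) ^ 2) * W y ^ 2
    - (1 / (p + 1)) * W y ^ (p + 1)) * rho p y

noncomputable def kappaFlux (p d y : ℝ) : ℝ :=
  -(d / (p - 1)) * ((1 - y ^ 2) * rho p y * kappa p d y ^ 2 / (1 + d * y))

lemma one_add_mul_pos {d y : ℝ} (hd : d ^ 2 < 1) (hy : y ∈ Icc (-1 : ℝ) 1) :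
    0 < 1 + d * y := by
  nlinarith [sq_nonneg (d + y), sq_nonneg (d - y), hy.1, hy.2]

lemma rpow_div_rpow_cancel {x : ℝ} (hx : 0 ≤ x) {q : ℝ} (hq : q ≠ 0) (c : ℝ) :
    (x ^ (c / q)) ^ q = x ^ c := by
  rw [← rpow_mul hx, div_mul_cancel₀ _ hq]

lemma one_sub_lorentz_sq {d y : ℝ} (hy : 1 + d * y ≠ 0) :
    1 - lorentz d y ^ 2 = (1 - d ^ 2) * (1 - y ^ 2) / (1 + d * y) ^ 2 := by
  rw [lorentz, div_pow, one_sub_div (pow_ne_zero 2 hy)]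
  ring

lemma hasDerivAt_lorentz {d y : ℝ} (hy : 1 + d * y ≠ 0) :
    HasDerivAt (lorentz d) ((1 - d ^ 2) / (1 + d * y) ^ 2) y := by
  have h := ((hasDerivAt_id y).add_const d).div
    (((hasDerivAt_id y).const_mul d).const_add 1) hy
  exact h.congr_deriv (by simp only [id]; ring)

lemma lorentz_neg_one {d : ℝ} (hd : d ≠ 1) : lorentz d (-1) = -1 := by
  rw [lorentz, div_eq_iff (by contrapose! hd; linarith)]
  ring

lemma lorentz_one {d : ℝ} (hd : d ≠ -1) : lorentz d 1 = 1 := by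
  rw [lorentz, div_eq_iff (by contrapose! hd; linarith)]
  ring

lemma kappa0_pos {p : ℝ} (hp : 1 < p) : 0 < kappa0 p :=
  rpow_pos_of_pos (div_pos (by linarith) (by nlinarith)) _

lemma kappa0_rpow_sub_one {p : ℝ} (hp : 1 < p) :
    kappa0 p ^ (p - 1) = 2 * (p + 1) / (p - 1) ^ 2 := by
  rw [kappa0, rpow_div_rpow_cancel (by positivity) (sub_ne_zero.mpr hp.ne'), rpow_one]

lemma kappa0_rpow_add_one {p : ℝ} (hp : 1 < p) :
    kappa0 p ^ (p + 1) = kappa0 p ^ 2 * (2 * (p + 1) / (p - 1) ^ 2) := by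
  rw [← kappa0_rpow_sub_one hp, ← rpow_two, ← rpow_add (kappa0_pos hp)]
  ring_nf

lemma kappa_pos {p d y : ℝ} (hp : 1 < p) (hd : d ^ 2 < 1) (hy : 0 < 1 + d * y) :
    0 < kappa p d y :=
  div_pos (mul_pos (kappa0_pos hp) (rpow_pos_of_pos (by linarith) _)) (rpow_pos_of_pos hy _)

lemma kappa_rpow_sub_one {p d y : ℝ} (hp : 1 < p) (hd : d ^ 2 < 1) (hy : 0 < 1 + d * y) :
    kappa p d y ^ (p - 1) = 2 * (p + 1) / (p - 1) ^ 2 * (1 - d ^ 2) / (1 + d * y) ^ 2 := by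
  have hd' : 0 ≤ 1 - d ^ 2 := by linarith
  rw [kappa, div_rpow (mul_nonneg (kappa0_pos hp).le (rpow_nonneg hd' _)) (rpow_nonneg hy.le _),
    mul_rpow (kappa0_pos hp).le (rpow_nonneg hd' _),
    kappa0_rpow_sub_one hp, rpow_div_rpow_cancel hd' (sub_ne_zero.mpr hp.ne'),
    rpow_div_rpow_cancel hy.le (sub_ne_zero.mpr hp.ne'), rpow_one, rpow_two]

lemma kappa_rpow_add_one {p d y : ℝ} (hp : 1 < p) (hd : d ^ 2 < 1) (hy : 0 < 1 + d * y) :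
    kappa p d y ^ (p + 1)
      = kappa p d y ^ 2 * (2 * (p + 1) / (p - 1) ^ 2 * (1 - d ^ 2) / (1 + d * y) ^ 2) := by
  rw [← kappa_rpow_sub_one hp hd hy, ← rpow_two, ← rpow_add (kappa_pos hp hd hy)]
  ring_nf

lemma rho_lorentz {p d y : ℝ} (hp : 1 < p) (hd : d ^ 2 < 1) (hy : 0 ≤ 1 - y ^ 2)
    (hdy : 0 < 1 + d * y) :
    rho p (lorentz d y) = rho p y * kappa p d y ^ 2 / kappa0 p ^ 2 := by
  have hd' : 0 ≤ 1 - d ^ 2 := by linarith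
  have hκ₀ := (kappa0_pos hp).ne'
  rw [rho, one_sub_lorentz_sq hdy.ne', div_rpow (by positivity) (by positivity),
    mul_rpow hd' hy, ← rpow_pow_comm hdy.le, rho, kappa, div_pow, mul_pow,
    ← rpow_mul_natCast hd']
  field_simp
  push_cast
  ring

lemma energyDensity_const (p c y : ℝ) :
    energyDensity p (fun _ => c) y
      = ((p + 1) / (p - 1) ^ 2 * c ^ 2 - 1 / (p + 1) * c ^ (p + 1)) * rho p y := by
  simp [energyDensity]

lemma hasDerivAt_rho {p y : ℝ} (hy : 0 < 1 - y ^ 2) :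
    HasDerivAt (rho p) (-(2 / (p - 1)) * (2 * y) * rho p y / (1 - y ^ 2)) y := by
  have h := ((hasDerivAt_pow 2 y).const_sub 1).rpow_const (p := 2 / (p - 1)) (Or.inl hy.ne')
  refine h.congr_deriv ?_
  rw [rpow_sub_one hy.ne', rho]
  push_cast
  ring

lemma hasDerivAt_kappa {p d y : ℝ} (hy : 0 < 1 + d * y) :
    HasDerivAt (kappa p d) (-(2 / (p - 1)) * d * kappa p d y / (1 + d * y)) y := by
  have h := (hasDerivAt_const y (kappa0 p * (1 - d ^ 2) ^ (1 / (p - 1)))).div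
    ((((hasDerivAt_id y).const_mul d).const_add 1).rpow_const (p := 2 / (p - 1)) (Or.inl hy.ne'))
    (rpow_pos_of_pos hy _).ne'
  refine h.congr_deriv ?_
  simp only [id]
  rw [rpow_sub_one hy.ne', kappa]
  field_simp
  ring

lemma hasDerivAt_kappaFlux {p d y : ℝ} (hp : 1 < p) (hd : d ^ 2 < 1)
    (hy : y ∈ Ioo (-1 : ℝ) 1) :
    HasDerivAt (kappaFlux p d)
      (energyDensity p (kappa p d) y
        - energyDensity p (fun _ => kappa0 p) (lorentz d y) * ((1 - d ^ 2) / (1 + d * y) ^ 2))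
      y := by
  have hdy : 0 < 1 + d * y := one_add_mul_pos hd (Ioo_subset_Icc_self hy)
  replace hy : 0 < 1 - y ^ 2 := by nlinarith [hy.1, hy.2]
  have h := (((((hasDerivAt_pow 2 y).const_sub 1).mul (hasDerivAt_rho (p := p) hy)).mul
    ((hasDerivAt_kappa (p := p) hdy).pow 2)).div
    (((hasDerivAt_id y).const_mul d).const_add 1) hdy.ne').const_mul (-(d / (p - 1)))
  refine h.congr_deriv ?_
  have hp1 : p - 1 ≠ 0 := sub_ne_zero.mpr hp.ne'
  have hp2 : p + 1 ≠ 0 := by linarith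
  have hκ₀ := (kappa0_pos hp).ne'
  simp only [Pi.mul_apply, Pi.pow_apply, id]
  rw [energyDensity, energyDensity_const, (hasDerivAt_kappa hdy).deriv,
    kappa_rpow_add_one hp hd hdy, kappa0_rpow_add_one hp, rho_lorentz hp hd hy.le hdy]
  field_simp
  ring

lemma kappaFlux_one (p d : ℝ) : kappaFlux p d 1 = 0 := by
  simp [kappaFlux]

lemma kappaFlux_neg_one (p d : ℝ) : kappaFlux p d (-1) = 0 := by
  simp [kappaFlux]

lemma continuous_rho {p : ℝ} (hp : 1 < p) : Continuous (rho p) :=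
  (by fun_prop : Continuous fun y : ℝ => 1 - y ^ 2).rpow_const
    fun _ => Or.inr (div_nonneg zero_le_two (by linarith))

lemma continuousOn_kappa {p d : ℝ} (hd : d ^ 2 < 1) : ContinuousOn (kappa p d) (Icc (-1) 1) :=
  fun _ hy => (hasDerivAt_kappa (one_add_mul_pos hd hy)).continuousAt.continuousWithinAt

lemma continuousOn_energyDensity_kappa {p d : ℝ} (hp : 1 < p) (hd : d ^ 2 < 1) :
    ContinuousOn (energyDensity p (kappa p d)) (Icc (-1) 1) := by
  have hκ := continuousOn_kappa (p := p) hd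
  have hdy : ∀ y ∈ Icc (-1 : ℝ) 1, 1 + d * y ≠ 0 := fun y hy => (one_add_mul_pos hd hy).ne'
  have hκp : ContinuousOn (fun y => kappa p d y ^ (p + 1)) (Icc (-1) 1) :=
    hκ.rpow_const fun y hy => Or.inl (kappa_pos hp hd (one_add_mul_pos hd hy)).ne'
  refine ContinuousOn.congr (f := fun y =>
      ((1 / 2) * (-(2 / (p - 1)) * d * kappa p d y / (1 + d * y)) ^ 2 * (1 - y ^ 2)
        + ((p + 1) / (p - 1) ^ 2) * kappa p d y ^ 2
        - (1 / (p + 1)) * kappa p d y ^ (p + 1)) * rho p y) ?_ fun y hy => ?_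
  · refine ContinuousOn.mul ?_ (continuous_rho hp).continuousOn
    refine ((ContinuousOn.mul ?_ (by fun_prop)).add (by fun_prop)).sub
      (continuousOn_const.mul hκp)
    exact continuousOn_const.mul (((continuousOn_const.mul hκ).div (by fun_prop) hdy).pow 2)
  · rw [energyDensity, (hasDerivAt_kappa (one_add_mul_pos hd hy)).deriv]

lemma continuousOn_kappaFlux {p d : ℝ} (hp : 1 < p) (hd : d ^ 2 < 1) :
    ContinuousOn (kappaFlux p d) (Icc (-1) 1) :=
  continuousOn_const.mul ((((by fun_prop : Continuous fun y : ℝ => 1 - y ^ 2).continuousOn.mul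
    (continuous_rho hp).continuousOn).mul ((continuousOn_kappa hd).pow 2)).div (by fun_prop)
    fun y hy => (one_add_mul_pos hd hy).ne')

lemma intervalIntegral_energyDensity_kappa {p d : ℝ} (hp : 1 < p) (hd : d ∈ Ioo (-1 : ℝ) 1) :
    ∫ y in (-1 : ℝ)..1, energyDensity p (kappa p d) y
      = ∫ y in (-1 : ℝ)..1, energyDensity p (fun _ => kappa0 p) y := by
  have hd2 : d ^ 2 < 1 := by nlinarith [hd.1, hd.2]
  have hIcc : uIcc (-1 : ℝ) 1 = Icc (-1) 1 := uIcc_of_le (by norm_num)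
  have hlorentz : ∀ y ∈ uIcc (-1 : ℝ) 1,
      HasDerivAt (lorentz d) ((1 - d ^ 2) / (1 + d * y) ^ 2) y := fun y hy =>
    hasDerivAt_lorentz (one_add_mul_pos hd2 (hIcc ▸ hy)).ne'
  have hjacobian : ContinuousOn (fun y => (1 - d ^ 2) / (1 + d * y) ^ 2) (uIcc (-1 : ℝ) 1) :=
    continuousOn_const.div (by fun_prop) fun y hy =>
      pow_ne_zero 2 (one_add_mul_pos hd2 (hIcc ▸ hy)).ne'
  have hconst : Continuous (energyDensity p (fun _ => kappa0 p)) := by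
    simp only [funext (energyDensity_const p (kappa0 p))]
    exact continuous_const.mul (continuous_rho hp)
  have hpulled : IntervalIntegrable
      (fun y => energyDensity p (fun _ => kappa0 p) (lorentz d y) * ((1 - d ^ 2) / (1 + d * y) ^ 2))
      volume (-1) 1 :=
    ((hconst.comp_continuousOn fun y hy => (hlorentz y hy).continuousAt.continuousWithinAt).mul
      hjacobian).intervalIntegrable
  have hkappa : IntervalIntegrable (energyDensity p (kappa p d)) volume (-1) 1 :=
    (continuousOn_energyDensity_kappa hp hd2).intervalIntegrable_of_Icc (by norm_num)
  have hflux := intervalIntegral.integral_eq_sub_of_hasDerivAt_of_le (by norm_num)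
    (continuousOn_kappaFlux hp hd2) (fun _ hy => hasDerivAt_kappaFlux hp hd2 hy)
    (hkappa.sub hpulled)
  have hsubst := intervalIntegral.integral_comp_mul_deriv hlorentz hjacobian hconst
  rw [lorentz_one (by linarith [hd.1]), lorentz_neg_one (by linarith [hd.2])] at hsubst
  simp only [Function.comp_apply] at hsubst
  rw [intervalIntegral.integral_sub hkappa hpulled, kappaFlux_one, kappaFlux_neg_one, sub_zero,
    sub_eq_zero, hsubst] at hflux
  exact hflux

/-- The unperturbed energy of the soliton `(κ(d,·),0)` equals that of `(κ₀,0)`,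
for every `d ∈ (-1,1)`. -/
theorem energy_kappa_d_eq_energy_kappa0 (p : ℝ) (hp : 1 < p) :
    ∀ d ∈ Ioo (-1 : ℝ) 1,
      (∫ y in Ioo (-1 : ℝ) 1,
          ((1 / 2) * (deriv (fun z => kappa p d z) y) ^ 2 * (1 - y ^ 2)
            + ((p + 1) / (p - 1) ^ 2) * (kappa p d y) ^ 2
            - (1 / (p + 1)) * (kappa p d y) ^ (p + 1)) * rho p y) =
      (∫ y in Ioo (-1 : ℝ) 1,
          (((p + 1) / (p - 1) ^ 2) * (kappa0 p) ^ 2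
            - (1 / (p + 1)) * (kappa0 p) ^ (p + 1)) * rho p y) := by
  intro d hd
  have h := intervalIntegral_energyDensity_kappa hp hd
  rw [intervalIntegral.integral_of_le (by norm_num), intervalIntegral.integral_of_le (by norm_num),
    integral_Ioc_eq_integral_Ioo, integral_Ioc_eq_integral_Ioo] at h
  simp only [energyDensity_const] at h
  exact h
end

section
/- Let p > 1, M > 0, 0 ≤ q < p, let f : ℝ → ℝ be continuous with |f(u)| ≤ M(1+|u|^q) for all u, and set F(u) = ∫₀^u f(v) dv. Then there exists C = C(p,M,q) > 0 such that for all s ≥ 0 and every measurable function w : (−1,1) → ℝ: e^{−2(p+1)s/(p−1)} ∫_{−1}^{1} |F(e^{2s/(p−1)} w(y))| ρ(y) dy + e^{−2ps/(p−1)} ∫_{−1}^{1} |f(e^{2s/(p−1)} w(y)) · w(y)| ρ(y) dy ≤ C e^{−2(p−q)s/(p−1)} ( 1 + ∫_{−1}^{1} |w(y)|^{p+1} ρ(y) dy ). -/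
open MeasureTheory Real Set

/-- The antiderivative `F(u) = ∫₀^u f(v) dv`. -/
noncomputable def Fant (f : ℝ → ℝ) (u : ℝ) : ℝ := ∫ v in (0 : ℝ)..u, f v

/-!
Write `λ = e^{2s/(p-1)} ≥ 1`. The growth bound gives `|F(u)| ≤ M(1+|u|^q)|u|` and
`|f(u) w| ≤ M(1+|u|^q)|w|`, so after scaling `u = λw` both terms are at most
`M λ^{-p}(|w| + λ^q |w|^{q+1}) ≤ M λ^{q-p}(|w| + |w|^{q+1}) ≤ 2M λ^{q-p}(1 + |w|^{p+1})`.
Since `0 ≤ ρ ≤ 1` on `(-1,1)`, integrating against `ρ` costs at most a factor `2`.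
-/

lemma rpow_le_one_add_rpow {x r t : ℝ} (hx : 0 ≤ x) (hr : 0 ≤ r) (hrt : r ≤ t) :
    x ^ r ≤ 1 + x ^ t := by
  have ht : 0 ≤ x ^ t := rpow_nonneg hx t
  rcases le_or_gt x 1 with h | h
  · linarith [rpow_le_one hx h hr]
  · linarith [rpow_le_rpow_of_exponent_le h.le hrt]

lemma abs_Fant_le {f : ℝ → ℝ} {M q : ℝ} (hM : 0 ≤ M) (hq : 0 ≤ q)
    (hf : ∀ u, |f u| ≤ M * (1 + |u| ^ q)) (u : ℝ) :
    |Fant f u| ≤ M * (1 + |u| ^ q) * |u| := by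
  have hbound : ∀ v ∈ uIoc (0 : ℝ) u, ‖f v‖ ≤ M * (1 + |u| ^ q) := by
    intro v hv
    have hvu : |v| ≤ |u| := by
      simpa using abs_sub_left_of_mem_uIcc (uIoc_subset_uIcc hv)
    calc ‖f v‖ ≤ M * (1 + |v| ^ q) := hf v
      _ ≤ M * (1 + |u| ^ q) := by gcongr
  simpa [Fant] using intervalIntegral.norm_integral_le_of_norm_le_const hbound

section Scaling

variable {p q M a : ℝ}

lemma exp_neg_mul_growth_le (hq : 0 ≤ q) (hqp : q ≤ p) (hM : 0 ≤ M) (ha : 0 ≤ a) (x : ℝ) :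
    exp (-p * a) * (M * (1 + |exp a * x| ^ q) * |x|) ≤
      2 * M * exp ((q - p) * a) * (1 + |x| ^ (p + 1)) := by
  have hx := abs_nonneg x
  have hscale : |exp a * x| ^ q = exp (q * a) * |x| ^ q := by
    rw [abs_mul, abs_of_pos (exp_pos a), mul_rpow (exp_pos a).le hx, ← exp_mul, mul_comm a q]
  have hexp : exp (-p * a) * exp (q * a) = exp ((q - p) * a) := by
    rw [← exp_add]; ring_nf
  have hdecay : exp (-p * a) ≤ exp ((q - p) * a) := exp_le_exp.mpr (by nlinarith)
  have hlin : |x| ≤ 1 + |x| ^ (p + 1) := by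
    simpa using rpow_le_one_add_rpow hx zero_le_one (show (1 : ℝ) ≤ p + 1 by linarith)
  have hpow : |x| ^ (q + 1) ≤ 1 + |x| ^ (p + 1) :=
    rpow_le_one_add_rpow hx (by linarith) (by linarith)
  calc exp (-p * a) * (M * (1 + |exp a * x| ^ q) * |x|)
      = M * (exp (-p * a) * |x| + exp (-p * a) * exp (q * a) * (|x| ^ q * |x|)) := by
        rw [hscale]; ring
    _ = M * (exp (-p * a) * |x| + exp ((q - p) * a) * |x| ^ (q + 1)) := by
        rw [hexp, rpow_add_one' hx (by linarith)]
    _ ≤ M * (exp ((q - p) * a) * |x| + exp ((q - p) * a) * |x| ^ (q + 1)) := by gcongr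
    _ ≤ M * (exp ((q - p) * a) * (1 + |x| ^ (p + 1)) +
          exp ((q - p) * a) * (1 + |x| ^ (p + 1))) := by gcongr
    _ = 2 * M * exp ((q - p) * a) * (1 + |x| ^ (p + 1)) := by ring

lemma exp_neg_mul_abs_Fant_le {f : ℝ → ℝ} (hq : 0 ≤ q) (hqp : q ≤ p) (hM : 0 ≤ M)
    (ha : 0 ≤ a) (hf : ∀ u, |f u| ≤ M * (1 + |u| ^ q)) (x : ℝ) :
    exp (-(p + 1) * a) * |Fant f (exp a * x)| ≤
      2 * M * exp ((q - p) * a) * (1 + |x| ^ (p + 1)) := by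
  have hunscale : exp (-(p + 1) * a) * |exp a * x| = exp (-p * a) * |x| := by
    rw [abs_mul, abs_of_pos (exp_pos a), ← mul_assoc, ← exp_add]; ring_nf
  calc exp (-(p + 1) * a) * |Fant f (exp a * x)|
      ≤ exp (-(p + 1) * a) * (M * (1 + |exp a * x| ^ q) * |exp a * x|) := by
        gcongr; exact abs_Fant_le hM hq hf _
    _ = exp (-p * a) * (M * (1 + |exp a * x| ^ q) * |x|) := by
        linear_combination M * (1 + |exp a * x| ^ q) * hunscale
    _ ≤ _ := exp_neg_mul_growth_le hq hqp hM ha x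

lemma exp_neg_mul_abs_f_mul_le {f : ℝ → ℝ} (hq : 0 ≤ q) (hqp : q ≤ p) (hM : 0 ≤ M)
    (ha : 0 ≤ a) (hf : ∀ u, |f u| ≤ M * (1 + |u| ^ q)) (x : ℝ) :
    exp (-p * a) * |f (exp a * x) * x| ≤
      2 * M * exp ((q - p) * a) * (1 + |x| ^ (p + 1)) := by
  calc exp (-p * a) * |f (exp a * x) * x|
      ≤ exp (-p * a) * (M * (1 + |exp a * x| ^ q) * |x|) := by
        rw [abs_mul]; gcongr; exact hf _
    _ ≤ _ := exp_neg_mul_growth_le hq hqp hM ha x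

end Scaling

section Weight

variable {p : ℝ}

lemma rho_nonneg_of_mem (p : ℝ) {y : ℝ} (hy : y ∈ Ioo (-1 : ℝ) 1) : 0 ≤ rho p y :=
  rpow_nonneg (by nlinarith [hy.1, hy.2]) _

lemma rho_le_one_of_mem (hp : 1 ≤ p) {y : ℝ} (hy : y ∈ Ioo (-1 : ℝ) 1) : rho p y ≤ 1 :=
  rpow_le_one (by nlinarith [hy.1, hy.2]) (by nlinarith) (div_nonneg zero_le_two (by linarith))

lemma measurable_rho : Measurable (rho p) := by
  unfold rho; fun_prop

lemma setLIntegral_rho_le_two (hp : 1 ≤ p) :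
    ∫⁻ y in Ioo (-1 : ℝ) 1, ENNReal.ofReal (rho p y) ≤ 2 :=
  calc ∫⁻ y in Ioo (-1 : ℝ) 1, ENNReal.ofReal (rho p y)
      ≤ ∫⁻ _ in Ioo (-1 : ℝ) 1, 1 :=
        setLIntegral_mono measurable_const fun y hy =>
          ENNReal.ofReal_le_one.mpr (rho_le_one_of_mem hp hy)
    _ = 2 := by norm_num [Real.volume_Ioo]

lemma setLIntegral_mul_rho_le (hp : 1 ≤ p) {K : ℝ} (hK : 0 ≤ K) {g h : ℝ → ℝ}
    (hg : ∀ y, g y ≤ K * (1 + h y)) :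
    ∫⁻ y in Ioo (-1 : ℝ) 1, ENNReal.ofReal (g y * rho p y) ≤
      ENNReal.ofReal (2 * K) *
        (1 + ∫⁻ y in Ioo (-1 : ℝ) 1, ENNReal.ofReal (h y * rho p y)) := by
  set I := ∫⁻ y in Ioo (-1 : ℝ) 1, ENNReal.ofReal (h y * rho p y)
  have hpointwise : ∀ y ∈ Ioo (-1 : ℝ) 1, ENNReal.ofReal (g y * rho p y) ≤
      ENNReal.ofReal K * ENNReal.ofReal (rho p y) +
        ENNReal.ofReal K * ENNReal.ofReal (h y * rho p y) := by
    intro y hy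
    rw [← ENNReal.ofReal_mul hK, ← ENNReal.ofReal_mul hK]
    calc ENNReal.ofReal (g y * rho p y)
        ≤ ENNReal.ofReal (K * rho p y + K * (h y * rho p y)) := by
          gcongr
          nlinarith [hg y, rho_nonneg_of_mem p hy]
      _ ≤ _ := ENNReal.ofReal_add_le
  calc ∫⁻ y in Ioo (-1 : ℝ) 1, ENNReal.ofReal (g y * rho p y)
      ≤ ∫⁻ y in Ioo (-1 : ℝ) 1, ENNReal.ofReal K * ENNReal.ofReal (rho p y) +
          ENNReal.ofReal K * ENNReal.ofReal (h y * rho p y) :=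
        setLIntegral_mono' measurableSet_Ioo hpointwise
    _ = ENNReal.ofReal K * (∫⁻ y in Ioo (-1 : ℝ) 1, ENNReal.ofReal (rho p y)) +
          ENNReal.ofReal K * I := by
        rw [lintegral_add_left (measurable_rho.ennreal_ofReal.const_mul _),
          lintegral_const_mul' _ _ ENNReal.ofReal_ne_top,
          lintegral_const_mul' _ _ ENNReal.ofReal_ne_top]
    _ ≤ ENNReal.ofReal K * 2 + ENNReal.ofReal K * (2 * I) := by
        gcongr
        · exact setLIntegral_rho_le_two hp
        · exact le_mul_of_one_le_left zero_le one_le_two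
    _ = ENNReal.ofReal (2 * K) * (1 + I) := by
        rw [ENNReal.ofReal_mul zero_le_two, ENNReal.ofReal_ofNat]; ring

end Weight

/-- Estimate of the `f`-terms of the energy in similarity variables:
`e^{-2(p+1)s/(p-1)} ∫ |F(e^{2s/(p-1)} w)| ρ + e^{-2ps/(p-1)} ∫ |f(e^{2s/(p-1)} w) w| ρ`
`≤ C e^{-2(p-q)s/(p-1)} (1 + ∫ |w|^{p+1} ρ)`, as an inequality in `[0,∞]`,
with `C = C(p,M,q)`. -/
theorem f_terms_integral_bound (p M q : ℝ) (hp : 1 < p) (hM : 0 < M)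
    (hq0 : 0 ≤ q) (hqp : q < p) :
    ∃ C : ℝ, 0 < C ∧
      ∀ f : ℝ → ℝ, Continuous f → (∀ u : ℝ, |f u| ≤ M * (1 + |u| ^ q)) →
        ∀ s : ℝ, 0 ≤ s → ∀ w : ℝ → ℝ, Measurable w →
          (∫⁻ y in Ioo (-1 : ℝ) 1,
              ENNReal.ofReal (Real.exp (-2 * (p + 1) * s / (p - 1)) *
                |Fant f (Real.exp (2 * s / (p - 1)) * w y)| * rho p y))
            + (∫⁻ y in Ioo (-1 : ℝ) 1,
                ENNReal.ofReal (Real.exp (-2 * p * s / (p - 1)) *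
                  |f (Real.exp (2 * s / (p - 1)) * w y) * w y| * rho p y)) ≤
          ENNReal.ofReal (C * Real.exp (-2 * (p - q) * s / (p - 1))) *
            (1 + ∫⁻ y in Ioo (-1 : ℝ) 1, ENNReal.ofReal (|w y| ^ (p + 1) * rho p y)) := by
  refine ⟨8 * M, by positivity, fun f _ hf s hs w _ => ?_⟩
  set a := 2 * s / (p - 1)
  have ha : 0 ≤ a := div_nonneg (by linarith) (by linarith)
  have hK : 0 ≤ 2 * M * exp ((q - p) * a) := by positivity
  rw [show -2 * (p + 1) * s / (p - 1) = -(p + 1) * a by ring,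
    show -2 * p * s / (p - 1) = -p * a by ring,
    show -2 * (p - q) * s / (p - 1) = (q - p) * a by ring]
  calc _ ≤ ENNReal.ofReal (2 * (2 * M * exp ((q - p) * a))) *
          (1 + ∫⁻ y in Ioo (-1 : ℝ) 1, ENNReal.ofReal (|w y| ^ (p + 1) * rho p y)) +
        ENNReal.ofReal (2 * (2 * M * exp ((q - p) * a))) *
          (1 + ∫⁻ y in Ioo (-1 : ℝ) 1, ENNReal.ofReal (|w y| ^ (p + 1) * rho p y)) :=
        add_le_add
          (setLIntegral_mul_rho_le hp.le hK fun y =>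
            exp_neg_mul_abs_Fant_le hq0 hqp.le hM.le ha hf (w y))
          (setLIntegral_mul_rho_le hp.le hK fun y =>
            exp_neg_mul_abs_f_mul_le hq0 hqp.le hM.le ha hf (w y))
    _ = _ := by
        rw [← add_mul, ← ENNReal.ofReal_add (by positivity) (by positivity)]
        congr 2
        ring
end
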